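/- Let X_1,…,X_n be independent symmetric random vectors in a real separable Banach space E, each satisfying the weak Borell inequality WB(C,δ,θ). Let ‖·‖ be a continuous norm on E, set S_n = X_1+⋯+X_n and p_k = P(‖S_n‖ > 3^k) for k ≥ 0, and assume p_0 ≤ min{θ/2, 1/3}. Then for every k ≥ 1, p_k ≤ 6C·3^{−δ(k−1)} p_0 + 4 p_{k−1}². -/

import Mathlib

open MeasureTheory ProbabilityTheory
open scoped ENNReal BigOperators

noncomputable section
set_option linter.unusedSectionVars false
set_option linter.unusedVariables false
set_option linter.unusedTactic false
set_option maxHeartbeats 1000000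

/-- A continuous norm on a real normed space `E` (a norm possibly different from the
ambient one, required to be continuous with respect to the ambient topology). -/
def IsContNorm {E : Type*} [NormedAddCommGroup E] [NormedSpace ℝ E] (N : E → ℝ) : Prop :=
  Continuous N ∧ (∀ x y : E, N (x + y) ≤ N x + N y) ∧
    (∀ (c : ℝ) (x : E), N (c • x) = |c| * N x) ∧ ∀ x : E, N x = 0 → x = 0

/-- A random vector is symmetric if `X` and `-X` have the same distribution. -/
def IsSymmetricRV {Ω E : Type*} [MeasurableSpace Ω] [MeasurableSpace E] [Neg E]
    (μ : Measure Ω) (X : Ω → E) : Prop :=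
  Measure.map X μ = Measure.map (fun ω => -(X ω)) μ

/-- `X` satisfies the weak Borell inequality `WB(C, δ, θ)`: for every continuous norm `N`
with `P(N(X) > 1) < θ`, one has `P(N(X) > λ) ≤ C λ^(-δ) P(N(X) > 1)` for all `λ ≥ 1`. -/
def WeakBorell {Ω E : Type*} [MeasurableSpace Ω] [NormedAddCommGroup E] [NormedSpace ℝ E]
    (μ : Measure Ω) (X : Ω → E) (C δ θ : ℝ) : Prop :=
  ∀ N : E → ℝ, IsContNorm N → μ {ω | 1 < N (X ω)} < ENNReal.ofReal θ →
    ∀ lam : ℝ, 1 ≤ lam →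
      μ {ω | lam < N (X ω)} ≤ ENNReal.ofReal (C * lam ^ (-δ)) * μ {ω | 1 < N (X ω)}

section NFacts
variable {E : Type*} [NormedAddCommGroup E] [NormedSpace ℝ E] {N : E → ℝ}

lemma IsContNorm.zero (hN : IsContNorm N) : N 0 = 0 := by
  have := hN.2.2.1 0 0
  simpa using this

lemma IsContNorm.neg' (hN : IsContNorm N) (x : E) : N (-x) = N x := by
  have := hN.2.2.1 (-1) x
  simpa using this

lemma IsContNorm.nonneg (hN : IsContNorm N) (x : E) : 0 ≤ N x := by
  have h := hN.2.1 x (-x)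
  rw [add_neg_cancel, hN.zero, hN.neg' x] at h
  linarith

lemma IsContNorm.double (hN : IsContNorm N) (x : E) : N (x + x) = 2 * N x := by
  have := hN.2.2.1 2 x
  rw [two_smul] at this
  simpa using this

lemma IsContNorm.sub_le (hN : IsContNorm N) (x y : E) : N x - N y ≤ N (x - y) := by
  have := hN.2.1 (x - y) y
  simp only [sub_add_cancel] at this
  linarith

end NFacts

section Flip
variable {E : Type*} [NormedAddCommGroup E] {n : ℕ}

/-- Flip (negate) all coordinates outside `A`. -/
def sFlip (A : Finset (Fin n)) (f : Fin n → E) : Fin n → E :=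
  fun i => if i ∈ A then f i else -f i

lemma sFlip_sFlip (A : Finset (Fin n)) (f : Fin n → E) : sFlip A (sFlip A f) = f := by
  funext i; by_cases h : i ∈ A <;> simp [sFlip, h]

lemma sFlip_mem (A : Finset (Fin n)) (f : Fin n → E) {i : Fin n} (hi : i ∈ A) :
    sFlip A f i = f i := by simp [sFlip, hi]

lemma sum_add_sum_sFlip (A : Finset (Fin n)) (f : Fin n → E) :
    (∑ i, f i) + (∑ i, sFlip A f i) = (∑ i ∈ A, f i) + (∑ i ∈ A, f i) := by
  have h1 : (∑ i, f i) = (∑ i ∈ A, f i) + (∑ i ∈ Aᶜ, f i) :=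
    (Finset.sum_add_sum_compl A f).symm
  have h2 : (∑ i, sFlip A f i) = (∑ i ∈ A, f i) + (∑ i ∈ Aᶜ, -f i) := by
    rw [← Finset.sum_add_sum_compl A (sFlip A f)]
    congr 1
    · exact Finset.sum_congr rfl fun i hi => by simp [sFlip, hi]
    · exact Finset.sum_congr rfl fun i hi => by
        simp only [Finset.mem_compl] at hi
        simp [sFlip, hi]
  rw [h1, h2, Finset.sum_neg_distrib]
  abel

lemma sum_sFlip_mem (A : Finset (Fin n)) (f : Fin n → E) {B : Finset (Fin n)} (hBA : B ⊆ A) :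
    (∑ i ∈ B, sFlip A f i) = ∑ i ∈ B, f i :=
  Finset.sum_congr rfl fun i hi => sFlip_mem A f (hBA hi)

end Flip

section Meas
variable {E : Type*} [NormedAddCommGroup E] [NormedSpace ℝ E]
  [TopologicalSpace.SeparableSpace E] [MeasurableSpace E] [BorelSpace E] {n : ℕ}

lemma measurable_sFlip (A : Finset (Fin n)) : Measurable (sFlip (E := E) A) := by
  refine measurable_pi_lambda _ fun i => ?_
  simp only [sFlip]
  by_cases h : i ∈ A
  · simp only [if_pos h]; exact measurable_pi_apply i
  · simp only [if_neg h]; exact (measurable_pi_apply i).neg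

lemma measurable_setsum (A : Finset (Fin n)) :
    Measurable (fun f : Fin n → E => ∑ i ∈ A, f i) := by
  haveI : SecondCountableTopology E := UniformSpace.secondCountable_of_separable E
  exact (continuous_finset_sum A fun i _ => continuous_apply i).measurable

lemma measurableSet_tail {N : E → ℝ} (hN : IsContNorm N) (t : ℝ) (A : Finset (Fin n)) :
    MeasurableSet {f : Fin n → E | t < N (∑ i ∈ A, f i)} := by
  haveI : SecondCountableTopology E := UniformSpace.secondCountable_of_separable E
  exact measurableSet_lt measurable_const (hN.1.measurable.comp (measurable_setsum A))

end Meas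

section Prob
variable {Ω E : Type*} [MeasurableSpace Ω] [NormedAddCommGroup E] [NormedSpace ℝ E]
  [TopologicalSpace.SeparableSpace E] [MeasurableSpace E] [BorelSpace E]
  {μ : Measure Ω} [IsProbabilityMeasure μ] {n : ℕ} {X : Fin n → Ω → E}

lemma joint_measurable (hXmeas : ∀ i, Measurable (X i)) :
    Measurable (fun ω (i : Fin n) => X i ω) :=
  measurable_pi_lambda _ hXmeas

lemma joint_eq_pi (hXmeas : ∀ i, Measurable (X i))
    (hXindep : iIndepFun X μ) :
    Measure.map (fun ω (i : Fin n) => X i ω) μ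
      = Measure.pi (fun i => Measure.map (X i) μ) := by
  haveI : ∀ i, IsProbabilityMeasure (Measure.map (X i) μ) :=
    fun i => Measure.isProbabilityMeasure_map (hXmeas i).aemeasurable
  refine (Measure.pi_eq ?_).symm
  intro s hs
  rw [Measure.map_apply (joint_measurable hXmeas) (MeasurableSet.univ_pi hs)]
  have hpre : (fun ω (i : Fin n) => X i ω) ⁻¹' Set.pi Set.univ s
      = ⋂ i ∈ Finset.univ, X i ⁻¹' s i := by
    ext ω; simp [Set.mem_pi]
  rw [hpre, hXindep.measure_inter_preimage_eq_mul Finset.univ (fun i _ => hs i)]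
  exact Finset.prod_congr rfl fun i _ => (Measure.map_apply (hXmeas i) (hs i)).symm

lemma flip_inv (hXmeas : ∀ i, Measurable (X i))
    (hXindep : iIndepFun X μ)
    (hXsymm : ∀ i, IsSymmetricRV μ (X i)) (A : Finset (Fin n))
    {W : Set (Fin n → E)} (hW : MeasurableSet W) :
    μ ((fun ω => sFlip A (fun i => X i ω)) ⁻¹' W)
      = μ ((fun ω (i : Fin n) => X i ω) ⁻¹' W) := by
  classical
  set g : Fin n → E → E := fun i => if i ∈ A then id else Neg.neg with hg_def
  have hg : ∀ i, Measurable (g i) := by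
    intro i
    by_cases h : i ∈ A
    · simp only [hg_def, if_pos h]; exact measurable_id
    · simp only [hg_def, if_neg h]; exact measurable_neg
  have hcomp : (fun ω => sFlip A (fun i => X i ω)) = (fun ω (i : Fin n) => (g i ∘ X i) ω) := by
    funext ω; funext i
    by_cases h : i ∈ A <;> simp [sFlip, hg_def, h]
  have hXmeas' : ∀ i, Measurable (g i ∘ X i) := fun i => (hg i).comp (hXmeas i)
  have hXindep' : iIndepFun
      (fun i => g i ∘ X i) μ := hXindep.comp g hg
  have hmarg : ∀ i, Measure.map (g i ∘ X i) μ = Measure.map (X i) μ := by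
    intro i
    by_cases h : i ∈ A
    · simp only [hg_def, if_pos h]; rfl
    · simp only [hg_def, if_neg h]
      exact (hXsymm i).symm
  have hmap : Measure.map (fun ω (i : Fin n) => (g i ∘ X i) ω) μ
      = Measure.map (fun ω (i : Fin n) => X i ω) μ := by
    rw [joint_eq_pi hXmeas' hXindep', joint_eq_pi hXmeas hXindep]
    exact congrArg Measure.pi (funext hmarg)
  rw [hcomp, ← Measure.map_apply (joint_measurable hXmeas') hW,
    ← Measure.map_apply (joint_measurable hXmeas) hW, hmap]

lemma reflect_core (hXmeas : ∀ i, Measurable (X i))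
    (hXindep : iIndepFun X μ)
    (hXsymm : ∀ i, IsSymmetricRV μ (X i)) {N : E → ℝ} (hN : IsContNorm N)
    (A : Finset (Fin n)) {t : ℝ} {D : Set (Fin n → E)} (hD : MeasurableSet D)
    (hInv : ∀ f, f ∈ D ↔ sFlip A f ∈ D)
    (hbig : ∀ f ∈ D, t < N (∑ i ∈ A, f i)) :
    μ ((fun ω (i : Fin n) => X i ω) ⁻¹' D)
      ≤ 2 * μ ((fun ω (i : Fin n) => X i ω) ⁻¹' (D ∩ {f | t < N (∑ i, f i)})) := by
  classical
  set B : Set (Fin n → E) := {f | t < N (∑ i, f i)} with hB_def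
  have hBmeas : MeasurableSet B := measurableSet_tail hN t Finset.univ
  have hcover : D ⊆ (D ∩ B) ∪ (D ∩ sFlip A ⁻¹' B) := by
    intro f hf
    by_contra hcon
    simp only [Set.mem_union, Set.mem_inter_iff, Set.mem_preimage, hB_def,
      Set.mem_setOf_eq, not_or, not_and, not_lt] at hcon
    have h1 : N (∑ i, f i) ≤ t := hcon.1 hf
    have h2 : N (∑ i, sFlip A f i) ≤ t := hcon.2 hf
    have hdd : 2 * N (∑ i ∈ A, f i) = N ((∑ i, f i) + (∑ i, sFlip A f i)) := by
      rw [sum_add_sum_sFlip A f, hN.double]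
    have := hN.2.1 (∑ i, f i) (∑ i, sFlip A f i)
    have hb := hbig f hf
    nlinarith [hdd, this, h1, h2, hb]
  have hswap : μ ((fun ω (i : Fin n) => X i ω) ⁻¹' (D ∩ sFlip A ⁻¹' B))
      = μ ((fun ω (i : Fin n) => X i ω) ⁻¹' (D ∩ B)) := by
    have hWmeas : MeasurableSet (D ∩ B) := hD.inter hBmeas
    have hset : (fun ω => sFlip A (fun i => X i ω)) ⁻¹' (D ∩ B)
        = (fun ω (i : Fin n) => X i ω) ⁻¹' (D ∩ sFlip A ⁻¹' B) := by
      ext ω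
      simp only [Set.mem_preimage, Set.mem_inter_iff]
      constructor
      · rintro ⟨h1, h2⟩; exact ⟨(hInv _).mpr h1, h2⟩
      · rintro ⟨h1, h2⟩; exact ⟨(hInv _).mp h1, h2⟩
    rw [← hset, flip_inv hXmeas hXindep hXsymm A hWmeas]
  calc μ ((fun ω (i : Fin n) => X i ω) ⁻¹' D)
      ≤ μ ((fun ω (i : Fin n) => X i ω) ⁻¹' ((D ∩ B) ∪ (D ∩ sFlip A ⁻¹' B))) :=
        measure_mono (Set.preimage_mono hcover)
    _ ≤ μ ((fun ω (i : Fin n) => X i ω) ⁻¹' (D ∩ B))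
        + μ ((fun ω (i : Fin n) => X i ω) ⁻¹' (D ∩ sFlip A ⁻¹' B)) := by
          rw [Set.preimage_union]; exact measure_union_le _ _
    _ = 2 * μ ((fun ω (i : Fin n) => X i ω) ⁻¹' (D ∩ B)) := by rw [hswap]; ring

end Prob
section Levy
variable {Ω E : Type*} [MeasurableSpace Ω] [NormedAddCommGroup E] [NormedSpace ℝ E]
  [TopologicalSpace.SeparableSpace E] [MeasurableSpace E] [BorelSpace E]
  {μ : Measure Ω} [IsProbabilityMeasure μ] {n : ℕ} {X : Fin n → Ω → E} {N : E → ℝ}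

/-- coordinates `< j`. -/
def Rlt (n j : ℕ) : Finset (Fin n) := Finset.univ.filter (fun i => (i : ℕ) < j)

lemma Rlt_mono {n : ℕ} {m j : ℕ} (h : m ≤ j) : Rlt n m ⊆ Rlt n j := by
  intro i hi
  simp only [Rlt, Finset.mem_filter, Finset.mem_univ, true_and] at *
  omega

lemma Rlt_self (n : ℕ) : Rlt n n = Finset.univ := by
  ext i; simp [Rlt, i.isLt]

lemma Rlt_zero (n : ℕ) : Rlt n 0 = ∅ := by ext i; simp [Rlt]

lemma Rlt_succ {n j : ℕ} (hj : j < n) :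
    Rlt n (j + 1) = insert ⟨j, hj⟩ (Rlt n j) := by
  ext i
  simp only [Rlt, Finset.mem_filter, Finset.mem_univ, true_and, Finset.mem_insert]
  constructor
  · intro h
    rcases Nat.lt_succ_iff_lt_or_eq.mp h with h | h
    · exact Or.inr h
    · exact Or.inl (Fin.ext h)
  · rintro (rfl | h)
    · exact Nat.lt_succ_self j
    · omega

/-- Lévy-type bound for the tail of a sub-sum. -/
lemma tail_subsum (hXmeas : ∀ i, Measurable (X i))
    (hXindep : iIndepFun X μ)
    (hXsymm : ∀ i, IsSymmetricRV μ (X i)) (hN : IsContNorm N)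
    (A : Finset (Fin n)) (t : ℝ) :
    μ ((fun ω (i : Fin n) => X i ω) ⁻¹' {f | t < N (∑ i ∈ A, f i)})
      ≤ 2 * μ ((fun ω (i : Fin n) => X i ω) ⁻¹' {f | t < N (∑ i, f i)}) := by
  have hInv : ∀ f : Fin n → E,
      f ∈ {f : Fin n → E | t < N (∑ i ∈ A, f i)}
        ↔ sFlip A f ∈ {f : Fin n → E | t < N (∑ i ∈ A, f i)} := by
    intro f
    simp only [Set.mem_setOf_eq, sum_sFlip_mem A f (Finset.Subset.refl A)]
  have h := reflect_core (μ := μ) hXmeas hXindep hXsymm hN A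
    (measurableSet_tail hN t A) hInv (fun f hf => hf)
  refine h.trans (mul_le_mul_right (measure_mono ?_) 2)
  exact Set.preimage_mono Set.inter_subset_right

/-- Lévy maximal inequality for individual summands. -/
lemma levy_max (hXmeas : ∀ i, Measurable (X i))
    (hXindep : iIndepFun X μ)
    (hXsymm : ∀ i, IsSymmetricRV μ (X i)) (hN : IsContNorm N) (t : ℝ) :
    μ ((fun ω (i : Fin n) => X i ω) ⁻¹' {f | ∃ i, t < N (f i)})
      ≤ 2 * μ ((fun ω (i : Fin n) => X i ω) ⁻¹' {f | t < N (∑ i, f i)}) := by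
  classical
  set J : Ω → (Fin n → E) := fun ω (i : Fin n) => X i ω with hJ_def
  have hJmeas : Measurable J := joint_measurable hXmeas
  set B : Set (Fin n → E) := {f | t < N (∑ i, f i)} with hB_def
  have hBmeas : MeasurableSet B := measurableSet_tail hN t Finset.univ
  set D : Fin n → Set (Fin n → E) :=
    fun i => {f | t < N (f i) ∧ ∀ i', i' < i → ¬ t < N (f i')} with hD_def
  haveI : SecondCountableTopology E := UniformSpace.secondCountable_of_separable E
  have hsingle : ∀ i : Fin n, MeasurableSet {f : Fin n → E | t < N (f i)} := fun i =>
    measurableSet_lt measurable_const (hN.1.measurable.comp (measurable_pi_apply i))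
  have hDmeas : ∀ i, MeasurableSet (D i) := by
    intro i
    have : D i = {f : Fin n → E | t < N (f i)} ∩ ⋂ (i' : Fin n) (_ : i' < i),
        {f : Fin n → E | t < N (f i')}ᶜ := by
      ext f; simp [hD_def, Set.mem_iInter]
    rw [this]
    exact (hsingle i).inter (MeasurableSet.iInter fun i' =>
      MeasurableSet.iInter fun _ => (hsingle i').compl)
  have hDdisj : Pairwise (Function.onFun Disjoint fun i => J ⁻¹' D i) := by
    intro i i' hne
    refine Set.disjoint_left.mpr fun ω hi hi' => ?_
    simp only [hD_def, Set.mem_preimage, Set.mem_setOf_eq] at hi hi'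
    rcases lt_or_gt_of_ne hne with h | h
    · exact hi'.2 i h hi.1
    · exact hi.2 i' h hi'.1
  have hDcover : {f : Fin n → E | ∃ i, t < N (f i)} ⊆ ⋃ i, D i := by
    intro f hf
    obtain ⟨i, hi⟩ := hf
    have hne : (Finset.univ.filter fun i : Fin n => t < N (f i)).Nonempty :=
      ⟨i, by simp [hi]⟩
    set i0 := (Finset.univ.filter fun i : Fin n => t < N (f i)).min' hne with hi0
    have hi0mem := (Finset.univ.filter fun i : Fin n => t < N (f i)).min'_mem hne
    simp only [Finset.mem_filter, Finset.mem_univ, true_and] at hi0mem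
    refine Set.mem_iUnion.mpr ⟨i0, hi0mem, fun i' hlt hcon => ?_⟩
    have : i0 ≤ i' := Finset.min'_le _ i' (by simp [hcon])
    exact absurd hlt (not_lt.mpr this)
  have hDrefl : ∀ i, μ (J ⁻¹' D i) ≤ 2 * μ (J ⁻¹' (D i ∩ B)) := by
    intro i
    refine reflect_core hXmeas hXindep hXsymm hN {i} (hDmeas i) ?_ ?_
    · intro f
      have h1 : sFlip {i} f i = f i := sFlip_mem {i} f (Finset.mem_singleton_self i)
      have h2 : ∀ i', N (sFlip {i} f i') = N (f i') := by
        intro i'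
        by_cases h : i' ∈ ({i} : Finset (Fin n))
        · rw [sFlip_mem {i} f h]
        · show N (if i' ∈ ({i} : Finset (Fin n)) then f i' else -f i') = _
          rw [if_neg h, hN.neg']
      simp only [hD_def, Set.mem_setOf_eq, h2]
    · intro f hf
      rw [Finset.sum_singleton]
      exact hf.1
  calc μ (J ⁻¹' {f | ∃ i, t < N (f i)}) ≤ μ (J ⁻¹' ⋃ i, D i) :=
        measure_mono (Set.preimage_mono hDcover)
    _ = μ (⋃ i, J ⁻¹' D i) := by rw [Set.preimage_iUnion]
    _ = ∑' i, μ (J ⁻¹' D i) := measure_iUnion hDdisj fun i => hJmeas (hDmeas i)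
    _ ≤ ∑' i, 2 * μ (J ⁻¹' (D i ∩ B)) := ENNReal.tsum_le_tsum hDrefl
    _ = 2 * ∑' i, μ (J ⁻¹' (D i ∩ B)) := ENNReal.tsum_mul_left
    _ = 2 * μ (⋃ i, J ⁻¹' (D i ∩ B)) := by
        rw [measure_iUnion ?_ fun i => hJmeas ((hDmeas i).inter hBmeas)]
        intro i i' hne
        exact Set.disjoint_of_subset (Set.preimage_mono Set.inter_subset_left)
          (Set.preimage_mono Set.inter_subset_left) (hDdisj hne)
    _ ≤ 2 * μ (J ⁻¹' B) := by
        refine mul_le_mul_right (measure_mono ?_) 2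
        refine Set.iUnion_subset fun i => Set.preimage_mono Set.inter_subset_right

end Levy
section HJ
variable {Ω E : Type*} [MeasurableSpace Ω] [NormedAddCommGroup E] [NormedSpace ℝ E]
  [TopologicalSpace.SeparableSpace E] [MeasurableSpace E] [BorelSpace E]
  {μ : Measure Ω} [IsProbabilityMeasure μ] {n : ℕ} {X : Fin n → Ω → E} {N : E → ℝ}

lemma hoffmann_jorgensen (hXmeas : ∀ i, Measurable (X i))
    (hXindep : iIndepFun X μ)
    (hXsymm : ∀ i, IsSymmetricRV μ (X i)) (hN : IsContNorm N) {t : ℝ} (ht : 1 ≤ t) :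
    μ ((fun ω (i : Fin n) => X i ω) ⁻¹' {f | 3 * t < N (∑ i, f i)})
      ≤ μ ((fun ω (i : Fin n) => X i ω) ⁻¹' {f | ∃ i, t < N (f i)})
        + (2 * μ ((fun ω (i : Fin n) => X i ω) ⁻¹' {f | t < N (∑ i, f i)}))
          * (2 * μ ((fun ω (i : Fin n) => X i ω) ⁻¹' {f | t < N (∑ i, f i)})) := by
  classical
  haveI : SecondCountableTopology E := UniformSpace.secondCountable_of_separable E
  set J : Ω → (Fin n → E) := fun ω (i : Fin n) => X i ω with hJ_def
  have hJmeas : Measurable J := joint_measurable hXmeas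
  set B : Set (Fin n → E) := {f | t < N (∑ i, f i)} with hB_def
  have hBmeas : MeasurableSet B := measurableSet_tail hN t Finset.univ
  set P : ℕ → (Fin n → E) → E := fun j f => ∑ i ∈ Rlt n j, f i with hP_def
  have hPmeas : ∀ j, Measurable (P j) := fun j => measurable_setsum (Rlt n j)
  set D : ℕ → Set (Fin n → E) :=
    fun j => {f | t < N (P j f) ∧ ∀ m, m < j → ¬ t < N (P m f)} with hD_def
  have hDmeas : ∀ j, MeasurableSet (D j) := by
    intro j
    have : D j = {f : Fin n → E | t < N (P j f)} ∩ ⋂ (m : ℕ) (_ : m < j),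
        {f : Fin n → E | t < N (P m f)}ᶜ := by
      ext f; simp [hD_def, Set.mem_iInter]
    rw [this]
    exact ((measurableSet_lt measurable_const (hN.1.measurable.comp (hPmeas j))).inter
      (MeasurableSet.iInter fun m => MeasurableSet.iInter fun _ =>
        (measurableSet_lt measurable_const (hN.1.measurable.comp (hPmeas m))).compl))
  set C : ℕ → Set (Fin n → E) := fun j => {f | t < N (∑ i ∈ (Rlt n j)ᶜ, f i)} with hC_def
  have hCmeas : ∀ j, MeasurableSet (C j) := fun j => measurableSet_tail hN t (Rlt n j)ᶜ
  -- the sets D j are pairwise disjoint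
  have hDdisj : ∀ j j', j ≠ j' → Disjoint (D j) (D j') := by
    intro j j' hne
    refine Set.disjoint_left.mpr fun f hj hj' => ?_
    simp only [hD_def, Set.mem_setOf_eq] at hj hj'
    rcases lt_or_gt_of_ne hne with h | h
    · exact hj'.2 j h hj.1
    · exact hj.2 j' h hj'.1
  -- covering
  have hcover : {f : Fin n → E | 3 * t < N (∑ i, f i)}
      ⊆ {f : Fin n → E | ∃ i, t < N (f i)}
        ∪ ⋃ j ∈ Finset.range (n + 1), (D j ∩ C j) := by
    intro f hf
    simp only [Set.mem_setOf_eq] at hf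
    by_cases hmax : ∃ i, t < N (f i)
    · exact Or.inl hmax
    push_neg at hmax
    right
    have hPn : P n f = ∑ i, f i := by rw [hP_def]; simp [Rlt_self]
    have hne : ((Finset.range (n + 1)).filter fun j => t < N (P j f)).Nonempty := by
      refine ⟨n, Finset.mem_filter.mpr ⟨Finset.self_mem_range_succ n, ?_⟩⟩
      rw [hPn]; linarith
    set j0 := ((Finset.range (n + 1)).filter fun j => t < N (P j f)).min' hne with hj0
    have hj0mem := ((Finset.range (n + 1)).filter fun j => t < N (P j f)).min'_mem hne
    rw [← hj0] at hj0mem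
    simp only [Finset.mem_filter, Finset.mem_range] at hj0mem
    obtain ⟨hj0n, hj0big⟩ := hj0mem
    have hmin : ∀ m, m < j0 → ¬ t < N (P m f) := by
      intro m hm hcon
      have hmem : m ∈ (Finset.range (n + 1)).filter fun j => t < N (P j f) :=
        Finset.mem_filter.mpr ⟨Finset.mem_range.mpr (by omega), hcon⟩
      exact absurd (Finset.min'_le _ m hmem) (not_le.mpr hm)
    have hj0pos : j0 ≠ 0 := by
      intro h0
      rw [h0, hP_def] at hj0big
      simp only [Rlt_zero, Finset.sum_empty] at hj0big
      rw [hN.zero] at hj0big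
      linarith
    clear_value j0
    obtain ⟨m, rfl⟩ : ∃ m, j0 = m + 1 := ⟨j0 - 1, by omega⟩
    have hmn : m < n := by omega
    -- N (P (m+1) f) ≤ 2 t
    have hsplit : P (m + 1) f = P m f + f ⟨m, hmn⟩ := by
      rw [hP_def]
      simp only
      rw [Rlt_succ hmn, Finset.sum_insert (by simp [Rlt])]
      exact add_comm _ _
    have hPle : N (P (m + 1) f) ≤ 2 * t := by
      rw [hsplit]
      have h1 := hN.2.1 (P m f) (f ⟨m, hmn⟩)
      have h2 : N (P m f) ≤ t := not_lt.mp (hmin m (Nat.lt_succ_self m))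
      have h3 := hmax ⟨m, hmn⟩
      linarith
    -- tail sum big
    have hCsum : t < N (∑ i ∈ (Rlt n (m + 1))ᶜ, f i) := by
      have hadd : P (m + 1) f + ∑ i ∈ (Rlt n (m + 1))ᶜ, f i = ∑ i, f i :=
        Finset.sum_add_sum_compl (Rlt n (m + 1)) f
      have := hN.2.1 (P (m + 1) f) (∑ i ∈ (Rlt n (m + 1))ᶜ, f i)
      rw [hadd] at this
      linarith
    exact Set.mem_biUnion (Finset.mem_range.mpr (by omega))
      ⟨⟨hj0big, hmin⟩, hCsum⟩
  -- independence factorization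
  have hfact : ∀ j, μ (J ⁻¹' (D j ∩ C j)) = μ (J ⁻¹' (D j)) * μ (J ⁻¹' (C j)) := by
    intro j
    set ψ : ({i : Fin n // i ∈ Rlt n j} → E) → (Fin n → E) :=
      fun g i => if h : i ∈ Rlt n j then g ⟨i, h⟩ else 0 with hψ_def
    have hψmeas : Measurable ψ := by
      refine measurable_pi_lambda _ fun i => ?_
      simp only [hψ_def]
      by_cases h : i ∈ Rlt n j
      · simp only [dif_pos h]; exact measurable_pi_apply _
      · simp only [dif_neg h]; exact measurable_const
    have hσmeas : Measurable (fun g : {i : Fin n // i ∈ (Rlt n j)ᶜ} → E => ∑ i, g i) :=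
      (continuous_finset_sum Finset.univ fun i _ => continuous_apply i).measurable
    have hP_ext : ∀ (m : ℕ), m ≤ j → ∀ f : Fin n → E,
        P m (ψ fun i : {i : Fin n // i ∈ Rlt n j} => f i.1) = P m f := by
      intro m hm f
      refine Finset.sum_congr rfl fun i hi => ?_
      have : i ∈ Rlt n j := Rlt_mono hm hi
      simp only [hψ_def, dif_pos this]
    have hDiff : ∀ f : Fin n → E,
        (ψ fun i : {i : Fin n // i ∈ Rlt n j} => f i.1) ∈ D j ↔ f ∈ D j := by
      intro f
      simp only [hD_def, Set.mem_setOf_eq]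
      refine and_congr (by rw [hP_ext j le_rfl f]) (forall_congr' fun m => ?_)
      refine imp_congr_right fun hm => not_congr ?_
      rw [hP_ext m hm.le f]
    have base := hXindep.indepFun_finset (Rlt n j) (Rlt n j)ᶜ disjoint_compl_right hXmeas
    have hindep := base.comp hψmeas hσmeas
    have hUD : J ⁻¹' (D j)
        = (fun ω => ψ (fun i : {i : Fin n // i ∈ Rlt n j} => X i.1 ω)) ⁻¹' (D j) := by
      ext ω
      simp only [Set.mem_preimage]
      exact (hDiff (J ω)).symm
    have hZC : J ⁻¹' (C j)
        = (fun ω => ∑ i : {i : Fin n // i ∈ (Rlt n j)ᶜ}, X i.1 ω) ⁻¹' {x | t < N x} := by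
      ext ω
      simp only [Set.mem_preimage, Set.mem_setOf_eq, hC_def]
      rw [← Finset.sum_coe_sort (Rlt n j)ᶜ (fun i => X i ω)]
    rw [Set.preimage_inter, hUD, hZC]
    exact hindep.measure_inter_preimage_eq_mul _ _ (hDmeas j)
      (measurableSet_lt measurable_const hN.1.measurable)
  -- partial-sum Lévy bound
  have hDrefl : ∀ j, μ (J ⁻¹' (D j)) ≤ 2 * μ (J ⁻¹' (D j ∩ B)) := by
    intro j
    refine reflect_core hXmeas hXindep hXsymm hN (Rlt n j) (hDmeas j) ?_ ?_
    · intro f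
      have hPflip : ∀ m, m ≤ j → P m (sFlip (Rlt n j) f) = P m f := by
        intro m hm
        exact sum_sFlip_mem (Rlt n j) f (Rlt_mono hm)
      simp only [hD_def, Set.mem_setOf_eq]
      refine and_congr (by rw [hPflip j le_rfl]) (forall_congr' fun m => ?_)
      refine imp_congr_right fun hm => not_congr ?_
      rw [hPflip m hm.le]
    · intro f hf
      exact hf.1
  have hDsum : ∑ j ∈ Finset.range (n + 1), μ (J ⁻¹' (D j)) ≤ 2 * μ (J ⁻¹' B) := by
    calc ∑ j ∈ Finset.range (n + 1), μ (J ⁻¹' (D j))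
        ≤ ∑ j ∈ Finset.range (n + 1), 2 * μ (J ⁻¹' (D j ∩ B)) :=
          Finset.sum_le_sum fun j _ => hDrefl j
      _ = 2 * ∑ j ∈ Finset.range (n + 1), μ (J ⁻¹' (D j ∩ B)) := by
          rw [Finset.mul_sum]
      _ = 2 * μ (⋃ j ∈ Finset.range (n + 1), J ⁻¹' (D j ∩ B)) := by
          rw [measure_biUnion_finset ?_ fun j _ => hJmeas ((hDmeas j).inter hBmeas)]
          intro j _ j' hj' hne
          exact ((hDdisj j j' hne).preimage J).mono
            (Set.preimage_mono Set.inter_subset_left)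
            (Set.preimage_mono Set.inter_subset_left)
      _ ≤ 2 * μ (J ⁻¹' B) := by
          refine mul_le_mul_right (measure_mono ?_) 2
          exact Set.iUnion₂_subset fun j _ => Set.preimage_mono Set.inter_subset_right
  calc μ (J ⁻¹' {f | 3 * t < N (∑ i, f i)})
      ≤ μ (J ⁻¹' ({f : Fin n → E | ∃ i, t < N (f i)}
          ∪ ⋃ j ∈ Finset.range (n + 1), (D j ∩ C j))) :=
        measure_mono (Set.preimage_mono hcover)
    _ ≤ μ (J ⁻¹' {f | ∃ i, t < N (f i)})
        + μ (J ⁻¹' ⋃ j ∈ Finset.range (n + 1), (D j ∩ C j)) := by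
          rw [Set.preimage_union]; exact measure_union_le _ _
    _ ≤ μ (J ⁻¹' {f | ∃ i, t < N (f i)})
        + ∑ j ∈ Finset.range (n + 1), μ (J ⁻¹' (D j ∩ C j)) := by
          refine add_le_add_right ?_ _
          rw [Set.preimage_iUnion₂]
          exact measure_biUnion_finset_le _ _
    _ ≤ μ (J ⁻¹' {f | ∃ i, t < N (f i)})
        + ∑ j ∈ Finset.range (n + 1), μ (J ⁻¹' (D j)) * (2 * μ (J ⁻¹' B)) := by
          refine add_le_add_right (Finset.sum_le_sum fun j _ => ?_) _
          rw [hfact j]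
          exact mul_le_mul' le_rfl (tail_subsum hXmeas hXindep hXsymm hN (Rlt n j)ᶜ t)
    _ = μ (J ⁻¹' {f | ∃ i, t < N (f i)})
        + (∑ j ∈ Finset.range (n + 1), μ (J ⁻¹' (D j))) * (2 * μ (J ⁻¹' B)) := by
          rw [Finset.sum_mul]
    _ ≤ μ (J ⁻¹' {f | ∃ i, t < N (f i)})
        + (2 * μ (J ⁻¹' B)) * (2 * μ (J ⁻¹' B)) :=
          add_le_add_right (mul_le_mul_left hDsum _) _

end HJ
section Arith

lemma one_add_sum_le_prod {ι : Type*} (s : Finset ι) (a : ι → ℝ) (ha : ∀ i ∈ s, 0 ≤ a i) :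
    1 + ∑ i ∈ s, a i ≤ ∏ i ∈ s, (1 + a i) := by
  classical
  induction s using Finset.cons_induction with
  | empty => simp
  | cons x s' hxs ih =>
    rw [Finset.sum_cons, Finset.prod_cons]
    have ha' : ∀ i ∈ s', 0 ≤ a i := fun i hi => ha i (Finset.mem_cons_of_mem hi)
    have ihh := ih ha'
    have hax : 0 ≤ a x := ha x (Finset.mem_cons_self x s')
    have hsum : 0 ≤ ∑ i ∈ s', a i := Finset.sum_nonneg ha'
    nlinarith [ihh, hax, hsum]

end Arith

section Bad
variable {Ω E : Type*} [MeasurableSpace Ω] [NormedAddCommGroup E] [NormedSpace ℝ E]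
  [TopologicalSpace.SeparableSpace E] [MeasurableSpace E] [BorelSpace E]
  {μ : Measure Ω} [IsProbabilityMeasure μ] {n : ℕ} {X : Fin n → Ω → E} {N : E → ℝ}

/-- If the Lévy bound is saturated at level 1 for index `i₀`, its tail vanishes beyond 3. -/
lemma bad_tail_zero (hXmeas : ∀ i, Measurable (X i))
    (hXindep : iIndepFun X μ)
    (hXsymm : ∀ i, IsSymmetricRV μ (X i)) (hN : IsContNorm N)
    {θ : ℝ} (hθ0 : 0 < θ) (i₀ : Fin n)
    (hq : μ {ω | 1 < N (X i₀ ω)} = ENNReal.ofReal θ)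
    (hp0h : μ ((fun ω (i : Fin n) => X i ω) ⁻¹' {f | 1 < N (∑ i, f i)}) ≤ ENNReal.ofReal (θ / 2))
    (hp0t : μ ((fun ω (i : Fin n) => X i ω) ⁻¹' {f | 1 < N (∑ i, f i)}) ≤ ENNReal.ofReal (1 / 3))
    {t : ℝ} (ht : 3 ≤ t) :
    μ {ω | t < N (X i₀ ω)} = 0 := by
  classical
  haveI : SecondCountableTopology E := UniformSpace.secondCountable_of_separable E
  set J : Ω → Fin n → E := fun ω (i : Fin n) => X i ω with hJ_def
  have hJmeas : Measurable J := joint_measurable hXmeas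
  set A : Set (Fin n → E) := {f | 1 < N (f i₀)} with hA_def
  have hAmeas : MeasurableSet A :=
    measurableSet_lt measurable_const (hN.1.measurable.comp (measurable_pi_apply i₀))
  set B : Set (Fin n → E) := {f | 1 < N (∑ i, f i)} with hB_def
  have hBmeas : MeasurableSet B := measurableSet_tail hN 1 Finset.univ
  set B' : Set (Fin n → E) := sFlip {i₀} ⁻¹' B with hB'_def
  have hB'meas : MeasurableSet B' := measurable_sFlip {i₀} hBmeas
  have hflip_keep : ∀ f : Fin n → E, sFlip {i₀} f i₀ = f i₀ :=
    fun f => sFlip_mem {i₀} f (Finset.mem_singleton_self i₀)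
  have hflip_sum : ∀ f : Fin n → E, (∑ i, f i) + (∑ i, sFlip {i₀} f i) = f i₀ + f i₀ := by
    intro f
    have := sum_add_sum_sFlip {i₀} f
    rwa [Finset.sum_singleton] at this
  -- A ⊆ B ∪ B'
  have hAsub : A ⊆ B ∪ B' := by
    intro f hf
    by_contra hcon
    simp only [Set.mem_union, not_or, hB'_def, Set.mem_preimage, hB_def,
      Set.mem_setOf_eq, not_lt] at hcon
    have h2 : 2 * N (f i₀) = N ((∑ i, f i) + (∑ i, sFlip {i₀} f i)) := by
      rw [hflip_sum f, hN.double]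
    have h3 := hN.2.1 (∑ i, f i) (∑ i, sFlip {i₀} f i)
    have hf' : 1 < N (f i₀) := hf
    nlinarith [hcon.1, hcon.2]
  -- swap
  have hswap : μ (J ⁻¹' (A ∩ B')) = μ (J ⁻¹' (A ∩ B)) := by
    have hset : (fun ω => sFlip {i₀} (fun i => X i ω)) ⁻¹' (A ∩ B) = J ⁻¹' (A ∩ B') := by
      ext ω
      simp only [Set.mem_preimage, Set.mem_inter_iff, hA_def, Set.mem_setOf_eq,
        hB'_def, hflip_keep]
      exact Iff.rfl
    rw [← hset, flip_inv hXmeas hXindep hXsymm {i₀} (hAmeas.inter hBmeas)]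
  -- inclusion-exclusion gives the triple intersection is null
  have htri : μ (J ⁻¹' (A ∩ B ∩ B')) = 0 := by
    have hie := measure_union_add_inter (μ := μ) (J ⁻¹' (A ∩ B))
      (hJmeas (hAmeas.inter hB'meas)) (t := J ⁻¹' (A ∩ B'))
    have hu : J ⁻¹' (A ∩ B) ∪ J ⁻¹' (A ∩ B') = J ⁻¹' A := by
      rw [← Set.preimage_union, ← Set.inter_union_distrib_left,
        Set.inter_eq_self_of_subset_left hAsub]
    have hi : J ⁻¹' (A ∩ B) ∩ J ⁻¹' (A ∩ B') = J ⁻¹' (A ∩ B ∩ B') := by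
      rw [← Set.preimage_inter]
      congr 1
      ext f
      constructor
      · rintro ⟨⟨h1, h2⟩, ⟨_, h3⟩⟩; exact ⟨⟨h1, h2⟩, h3⟩
      · rintro ⟨⟨h1, h2⟩, h3⟩; exact ⟨⟨h1, h2⟩, h1, h3⟩
    rw [hu, hi, hswap] at hie
    -- hie : μ (J⁻¹ A) + μ (J⁻¹ (A∩B∩B')) = μ (J⁻¹(A∩B)) + μ (J⁻¹(A∩B))
    have hJA : μ (J ⁻¹' A) = ENNReal.ofReal θ := hq
    have hABle : μ (J ⁻¹' (A ∩ B)) ≤ ENNReal.ofReal (θ / 2) :=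
      le_trans (measure_mono (Set.preimage_mono Set.inter_subset_right)) hp0h
    have hsum_le : μ (J ⁻¹' (A ∩ B)) + μ (J ⁻¹' (A ∩ B)) ≤ ENNReal.ofReal θ := by
      calc μ (J ⁻¹' (A ∩ B)) + μ (J ⁻¹' (A ∩ B))
          ≤ ENNReal.ofReal (θ / 2) + ENNReal.ofReal (θ / 2) := add_le_add hABle hABle
        _ = ENNReal.ofReal θ := by
            rw [← ENNReal.ofReal_add (by linarith) (by linarith)]
            norm_num
    rw [hJA] at hie
    have : ENNReal.ofReal θ + μ (J ⁻¹' (A ∩ B ∩ B')) ≤ ENNReal.ofReal θ + 0 := by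
      rw [add_zero]
      exact hie.le.trans hsum_le
    have := (ENNReal.add_le_add_iff_left ENNReal.ofReal_ne_top).mp this
    exact le_antisymm this zero_le
  -- the tail event is contained in the triple intersection
  have hsub2 : {f : Fin n → E | t < N (f i₀)}
      ∩ {f : Fin n → E | N (∑ i ∈ ({i₀}ᶜ : Finset (Fin n)), f i) < 2} ⊆ A ∩ B ∩ B' := by
    rintro f ⟨hf1, hf2⟩
    simp only [Set.mem_setOf_eq] at hf1 hf2
    set T : E := ∑ i ∈ ({i₀}ᶜ : Finset (Fin n)), f i with hT_def
    have hsplit : f i₀ + T = ∑ i, f i := by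
      have := Finset.sum_add_sum_compl ({i₀} : Finset (Fin n)) f
      rwa [Finset.sum_singleton] at this
    have hNfi : 3 < N (f i₀) := lt_of_le_of_lt (by linarith) hf1
    have hB1 : 1 < N (∑ i, f i) := by
      have h1 : N (f i₀) ≤ N (∑ i, f i) + N T := by
        have : f i₀ = (∑ i, f i) + (-T) := by rw [← hsplit]; abel
        calc N (f i₀) = N ((∑ i, f i) + (-T)) := by rw [← this]
          _ ≤ N (∑ i, f i) + N (-T) := hN.2.1 _ _
          _ = N (∑ i, f i) + N T := by rw [hN.neg']
      linarith
    have hB2 : 1 < N (∑ i, sFlip {i₀} f i) := by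
      have hfs : (∑ i, sFlip {i₀} f i) = f i₀ - T := by
        have h1 := hflip_sum f
        rw [← hsplit] at h1
        have : (f i₀ + T) + (∑ i, sFlip {i₀} f i) = f i₀ + f i₀ := h1
        rw [add_comm] at this
        rw [eq_sub_of_add_eq this]; abel
      have h1 : N (f i₀) ≤ N (f i₀ - T) + N T := by
        have : f i₀ = (f i₀ - T) + T := by abel
        calc N (f i₀) = N ((f i₀ - T) + T) := by rw [← this]
          _ ≤ N (f i₀ - T) + N T := hN.2.1 _ _
      rw [hfs]
      linarith
    exact ⟨⟨show (1:ℝ) < N (f i₀) by linarith, hB1⟩, hB2⟩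
  -- independence of the coordinate i₀ and the complementary sum
  have hφmeas : Measurable (fun g : {i : Fin n // i ∈ ({i₀} : Finset (Fin n))} → E =>
      g ⟨i₀, Finset.mem_singleton_self i₀⟩) := measurable_pi_apply _
  have hσmeas : Measurable (fun g : {i : Fin n // i ∈ ({i₀}ᶜ : Finset (Fin n))} → E =>
      ∑ i, g i) := (continuous_finset_sum Finset.univ fun i _ => continuous_apply i).measurable
  have base := hXindep.indepFun_finset {i₀} {i₀}ᶜ disjoint_compl_right hXmeas
  have hindep := base.comp hφmeas hσmeas
  have hkey := hindep.measure_inter_preimage_eq_mul {x : E | t < N x} {x : E | N x < 2}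
    (measurableSet_lt measurable_const hN.1.measurable)
    (measurableSet_lt hN.1.measurable measurable_const)
  have e1 : ((fun g : {i : Fin n // i ∈ ({i₀} : Finset (Fin n))} → E =>
        g ⟨i₀, Finset.mem_singleton_self i₀⟩)
        ∘ fun ω (i : {i : Fin n // i ∈ ({i₀} : Finset (Fin n))}) => X i.1 ω) ⁻¹' {x | t < N x}
      = {ω | t < N (X i₀ ω)} := rfl
  have e2 : ((fun g : {i : Fin n // i ∈ ({i₀}ᶜ : Finset (Fin n))} → E => ∑ i, g i)
        ∘ fun ω (i : {i : Fin n // i ∈ ({i₀}ᶜ : Finset (Fin n))}) => X i.1 ω) ⁻¹' {x | N x < 2}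
      = {ω | N (∑ i ∈ ({i₀}ᶜ : Finset (Fin n)), X i ω) < 2} := by
    ext ω
    simp only [Set.mem_preimage, Function.comp_apply, Set.mem_setOf_eq]
    rw [Finset.sum_coe_sort ({i₀}ᶜ : Finset (Fin n)) (fun i => X i ω)]
  rw [e1, e2] at hkey
  -- the intersection is inside the null triple set
  have hincl : {ω | t < N (X i₀ ω)} ∩ {ω | N (∑ i ∈ ({i₀}ᶜ : Finset (Fin n)), X i ω) < 2}
      ⊆ J ⁻¹' (A ∩ B ∩ B') := fun ω hω => hsub2 hω
  have hzero : μ ({ω | t < N (X i₀ ω)}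
      ∩ {ω | N (∑ i ∈ ({i₀}ᶜ : Finset (Fin n)), X i ω) < 2}) = 0 :=
    le_antisymm (htri ▸ measure_mono hincl) zero_le
  rw [hzero] at hkey
  -- second factor is positive
  have hT2pos : μ {ω | N (∑ i ∈ ({i₀}ᶜ : Finset (Fin n)), X i ω) < 2} ≠ 0 := by
    have hTtail : μ {ω | 1 < N (∑ i ∈ ({i₀}ᶜ : Finset (Fin n)), X i ω)}
        ≤ 2 * μ (J ⁻¹' B) := by
      have h := tail_subsum (μ := μ) hXmeas hXindep hXsymm hN ({i₀}ᶜ : Finset (Fin n)) 1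
      exact h
    have hTtail' : μ {ω | 1 < N (∑ i ∈ ({i₀}ᶜ : Finset (Fin n)), X i ω)}
        ≤ ENNReal.ofReal (2 / 3) := by
      refine hTtail.trans ?_
      calc 2 * μ (J ⁻¹' B) ≤ 2 * ENNReal.ofReal (1 / 3) := mul_le_mul_right hp0t 2
        _ = ENNReal.ofReal (2 / 3) := by
            rw [← ENNReal.ofReal_ofNat 2, ← ENNReal.ofReal_mul (by norm_num)]
            norm_num
    have hmeasT : MeasurableSet {ω | 1 < N (∑ i ∈ ({i₀}ᶜ : Finset (Fin n)), X i ω)} := by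
      refine measurableSet_lt measurable_const (hN.1.measurable.comp ?_)
      exact Finset.measurable_sum _ fun i _ => hXmeas i
    have hcompl : μ {ω | 1 < N (∑ i ∈ ({i₀}ᶜ : Finset (Fin n)), X i ω)}ᶜ
        = 1 - μ {ω | 1 < N (∑ i ∈ ({i₀}ᶜ : Finset (Fin n)), X i ω)} :=
      prob_compl_eq_one_sub hmeasT
    have hge : ENNReal.ofReal (1 / 3)
        ≤ μ {ω | 1 < N (∑ i ∈ ({i₀}ᶜ : Finset (Fin n)), X i ω)}ᶜ := by
      rw [hcompl]
      have h13 : ENNReal.ofReal (1 / 3) = 1 - ENNReal.ofReal (2 / 3) := by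
        rw [← ENNReal.ofReal_one, ← ENNReal.ofReal_sub _ (by norm_num)]
        norm_num
      rw [h13]
      exact tsub_le_tsub_left hTtail' 1
    have hsub3 : {ω | 1 < N (∑ i ∈ ({i₀}ᶜ : Finset (Fin n)), X i ω)}ᶜ
        ⊆ {ω | N (∑ i ∈ ({i₀}ᶜ : Finset (Fin n)), X i ω) < 2} := by
      intro ω hω
      simp only [Set.mem_compl_iff, Set.mem_setOf_eq, not_lt] at hω ⊢
      linarith
    intro h0
    have := hge.trans ((measure_mono hsub3).trans h0.le)
    simp [ENNReal.ofReal_eq_zero] at this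
  rcases mul_eq_zero.mp hkey.symm with h | h
  · exact h
  · exact absurd h hT2pos

end Bad

/-- **Recursive tail inequality.** For independent symmetric random vectors each
satisfying `WB(C, δ, θ)`, with `S t = P(N(∑ Xᵢ) > t)` and `pₖ = S(3^k)`, if
`p₀ ≤ min {θ/2, 1/3}` then `pₖ ≤ 6C·3^{−δ(k−1)} p₀ + 4 pₖ₋₁²` for all `k ≥ 1`. -/
theorem weakBorell_recursive_inequality
    {Ω E : Type*} [MeasurableSpace Ω] [NormedAddCommGroup E] [NormedSpace ℝ E]
    [CompleteSpace E] [TopologicalSpace.SeparableSpace E] [MeasurableSpace E] [BorelSpace E]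
    (μ : Measure Ω) [IsProbabilityMeasure μ] (n : ℕ)
    (X : Fin n → Ω → E) (hXmeas : ∀ i, Measurable (X i))
    (hXindep : iIndepFun X μ)
    (hXsymm : ∀ i, IsSymmetricRV μ (X i))
    (C δ θ : ℝ) (hC : 1 ≤ C) (hδ : 0 < δ) (hθ0 : 0 < θ) (hθ1 : θ < 1)
    (hWB : ∀ i, WeakBorell μ (X i) C δ θ)
    (N : E → ℝ) (hN : IsContNorm N)
    (p : ℕ → ℝ≥0∞) (hp : ∀ k, p k = μ {ω | (3 : ℝ) ^ k < N (∑ i, X i ω)})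
    (hp0 : p 0 ≤ ENNReal.ofReal (min (θ / 2) (1 / 3))) :
    ∀ k : ℕ, 1 ≤ k →
      p k ≤ ENNReal.ofReal (6 * C * (3 : ℝ) ^ (-δ * ((k : ℝ) - 1))) * p 0
            + 4 * (p (k - 1)) ^ 2 := by
  classical
  intro k hk
  haveI : SecondCountableTopology E := UniformSpace.secondCountable_of_separable E
  have hp0_fin : p 0 ≠ ∞ := by rw [hp 0]; exact measure_ne_top μ _
  have hp0h : p 0 ≤ ENNReal.ofReal (θ / 2) :=
    hp0.trans (ENNReal.ofReal_le_ofReal (min_le_left _ _))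
  have hp0t : p 0 ≤ ENNReal.ofReal (1 / 3) :=
    hp0.trans (ENNReal.ofReal_le_ofReal (min_le_right _ _))
  have hp0R : (p 0).toReal ≤ min (θ / 2) (1 / 3) :=
    ENNReal.toReal_le_of_le_ofReal (le_min (by linarith) (by norm_num)) hp0
  have hP0 : μ ((fun ω (i : Fin n) => X i ω) ⁻¹' {f | (1 : ℝ) < N (∑ i, f i)}) = p 0 := by
    have hset : ((fun ω (i : Fin n) => X i ω) ⁻¹' {f | (1 : ℝ) < N (∑ i, f i)})
        = {ω | (3 : ℝ) ^ (0 : ℕ) < N (∑ i, X i ω)} := by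
      ext ω
      simp only [Set.mem_preimage, Set.mem_setOf_eq, pow_zero]
    rw [hp 0, hset]
  -- the events `1 < N (X i)`
  have hAimeas : ∀ i : Fin n, MeasurableSet {ω | 1 < N (X i ω)} := fun i =>
    measurableSet_lt measurable_const (hN.1.measurable.comp (hXmeas i))
  have hLevy1 : μ ((fun ω (i : Fin n) => X i ω) ⁻¹' {f | ∃ i, (1 : ℝ) < N (f i)})
      ≤ 2 * p 0 := by
    have h := levy_max (μ := μ) hXmeas hXindep hXsymm hN (t := (1 : ℝ))
    rwa [hP0] at h
  have hq_le : ∀ i, μ {ω | 1 < N (X i ω)} ≤ 2 * p 0 := by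
    intro i
    refine (measure_mono (fun ω hω => ?_)).trans hLevy1
    exact ⟨i, hω⟩
  have hθ2p0 : 2 * p 0 ≤ ENNReal.ofReal θ := by
    calc 2 * p 0 ≤ 2 * ENNReal.ofReal (θ / 2) := mul_le_mul_right hp0h 2
      _ = ENNReal.ofReal θ := by
          rw [← ENNReal.ofReal_ofNat 2, ← ENNReal.ofReal_mul (by norm_num)]
          congr 1
          ring
  have hqθ : ∀ i, μ {ω | 1 < N (X i ω)} ≤ ENNReal.ofReal θ := fun i => (hq_le i).trans hθ2p0
  -- sum of the `q i` is at most `6 p 0`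
  have hq_sum : ∑ i, μ {ω | 1 < N (X i ω)} ≤ 6 * p 0 := by
    set a : Fin n → ℝ := fun i => (μ {ω | 1 < N (X i ω)}).toReal with ha_def
    have ha0 : ∀ i, 0 ≤ a i := fun i => ENNReal.toReal_nonneg
    have ha1 : ∀ i, a i ≤ 1 := fun i => by
      rw [ha_def]
      exact ENNReal.toReal_le_of_le_ofReal zero_le_one (by simpa using prob_le_one)
    set u : ℝ := ∑ i, a i with hu_def
    have hu0 : 0 ≤ u := Finset.sum_nonneg fun i _ => ha0 i
    -- product formula
    have hGmeas : MeasurableSet (⋂ i ∈ Finset.univ, X i ⁻¹' {x : E | ¬ 1 < N x}) := by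
      refine MeasurableSet.biInter (Finset.univ : Finset (Fin n)).countable_toSet fun i _ => ?_
      exact hXmeas i (measurableSet_lt measurable_const hN.1.measurable).compl
    have hprod : μ (⋂ i ∈ Finset.univ, X i ⁻¹' {x : E | ¬ 1 < N x})
        = ∏ i, μ (X i ⁻¹' {x : E | ¬ 1 < N x}) :=
      hXindep.measure_inter_preimage_eq_mul Finset.univ fun i _ =>
        (measurableSet_lt measurable_const hN.1.measurable).compl
    have hfac : ∀ i : Fin n, (μ (X i ⁻¹' {x : E | ¬ 1 < N x})).toReal = 1 - a i := by
      intro i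
      have h1 : X i ⁻¹' {x : E | ¬ 1 < N x} = {ω | 1 < N (X i ω)}ᶜ := rfl
      rw [h1, prob_compl_eq_one_sub (hAimeas i),
        ENNReal.toReal_sub_of_le prob_le_one ENNReal.one_ne_top, ENNReal.toReal_one]
    have hGR : (μ (⋂ i ∈ Finset.univ, X i ⁻¹' {x : E | ¬ 1 < N x})).toReal
        = ∏ i, (1 - a i) := by
      rw [hprod, ENNReal.toReal_prod]
      exact Finset.prod_congr rfl fun i _ => hfac i
    have hGc : (⋂ i ∈ Finset.univ, X i ⁻¹' {x : E | ¬ 1 < N x})ᶜ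
        ⊆ (fun ω (i : Fin n) => X i ω) ⁻¹' {f | ∃ i, (1 : ℝ) < N (f i)} := by
      intro ω hω
      simp only [Set.mem_compl_iff, Set.mem_iInter, Set.mem_preimage, Set.mem_setOf_eq,
        not_forall, not_not, Finset.mem_univ] at hω
      obtain ⟨i, _, hi⟩ := hω
      exact ⟨i, hi⟩
    have hUle : μ (⋂ i ∈ Finset.univ, X i ⁻¹' {x : E | ¬ 1 < N x})ᶜ ≤ 2 * p 0 :=
      (measure_mono hGc).trans hLevy1
    have hcomplG : μ (⋂ i ∈ Finset.univ, X i ⁻¹' {x : E | ¬ 1 < N x})ᶜ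
        = 1 - μ (⋂ i ∈ Finset.univ, X i ⁻¹' {x : E | ¬ 1 < N x}) :=
      prob_compl_eq_one_sub hGmeas
    have hmainR : 1 - ∏ i, (1 - a i) ≤ 2 * (p 0).toReal := by
      have h1 : (μ (⋂ i ∈ Finset.univ, X i ⁻¹' {x : E | ¬ 1 < N x})ᶜ).toReal
          ≤ (2 * p 0).toReal := by
        refine ENNReal.toReal_mono ?_ hUle
        exact ENNReal.mul_ne_top (by norm_num) hp0_fin
      rw [hcomplG, ENNReal.toReal_sub_of_le prob_le_one ENNReal.one_ne_top,
        ENNReal.toReal_one, hGR] at h1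
      rw [ENNReal.toReal_mul] at h1
      simpa using h1
    -- real arithmetic
    have hp0R3 : (p 0).toReal ≤ 1 / 3 := hp0R.trans (min_le_right _ _)
    have hprod_le : ∏ i, (1 - a i) ≤ (1 + u)⁻¹ := by
      have hstep1 : ∏ i, (1 - a i) ≤ ∏ i, (1 + a i)⁻¹ := by
        refine Finset.prod_le_prod (fun i _ => by linarith [ha1 i]) fun i _ => ?_
        rw [← one_div, le_div_iff₀ (by linarith [ha0 i])]
        nlinarith [ha0 i, ha1 i]
      have hstep2 : (∏ i, (1 + a i)⁻¹ : ℝ) = (∏ i, (1 + a i))⁻¹ := Finset.prod_inv_distrib _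
      have hstep3 : (1 : ℝ) + u ≤ ∏ i, (1 + a i) :=
        one_add_sum_le_prod Finset.univ a fun i _ => ha0 i
      calc ∏ i, (1 - a i) ≤ ∏ i, (1 + a i)⁻¹ := hstep1
        _ = (∏ i, (1 + a i))⁻¹ := hstep2
        _ ≤ (1 + u)⁻¹ := inv_anti₀ (by linarith) hstep3
    have huratio : u / (1 + u) ≤ 2 * (p 0).toReal := by
      have : 1 - (1 + u)⁻¹ ≤ 1 - ∏ i, (1 - a i) := by linarith
      have h2 : u / (1 + u) = 1 - (1 + u)⁻¹ := by
        field_simp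
        ring
      linarith [hmainR]
    have hule : u ≤ 6 * (p 0).toReal := by
      have h1 : u ≤ 2 * (p 0).toReal * (1 + u) := by
        rw [div_le_iff₀ (by linarith)] at huratio
        linarith
      have hp0nn : 0 ≤ (p 0).toReal := ENNReal.toReal_nonneg
      nlinarith [h1, hp0R3, hu0, hp0nn]
    -- back to ENNReal
    have hsum_fin : ∀ i ∈ Finset.univ, μ {ω | 1 < N (X i ω)} ≠ ∞ :=
      fun i _ => measure_ne_top μ _
    have hsum_eq : ∑ i, μ {ω | 1 < N (X i ω)} = ENNReal.ofReal u := by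
      rw [hu_def, ha_def, ← ENNReal.toReal_sum hsum_fin,
        ENNReal.ofReal_toReal (ENNReal.sum_ne_top.mpr hsum_fin)]
    rw [hsum_eq]
    calc ENNReal.ofReal u ≤ ENNReal.ofReal (6 * (p 0).toReal) := ENNReal.ofReal_le_ofReal hule
      _ = 6 * p 0 := by
          rw [ENNReal.ofReal_mul (by norm_num), ENNReal.ofReal_ofNat,
            ENNReal.ofReal_toReal hp0_fin]
  -- case split on k
  rcases eq_or_lt_of_le hk with hk1 | hk2
  · -- k = 1
    subst hk1
    have h1le : p 1 ≤ p 0 := by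
      rw [hp 1, hp 0]
      refine measure_mono fun ω hω => ?_
      simp only [Set.mem_setOf_eq, pow_one, pow_zero] at hω ⊢
      linarith
    have hconst : (1 : ℝ≥0∞) ≤ ENNReal.ofReal (6 * C * (3 : ℝ) ^ (-δ * (((1 : ℕ) : ℝ) - 1))) := by
      have he : -δ * (((1 : ℕ) : ℝ) - 1) = 0 := by norm_num
      rw [he, Real.rpow_zero, mul_one]
      rw [ENNReal.one_le_ofReal]
      linarith
    calc p 1 ≤ p 0 := h1le
      _ = 1 * p 0 := (one_mul _).symm
      _ ≤ ENNReal.ofReal (6 * C * (3 : ℝ) ^ (-δ * (((1 : ℕ) : ℝ) - 1))) * p 0 :=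
          mul_le_mul_left hconst _
      _ ≤ ENNReal.ofReal (6 * C * (3 : ℝ) ^ (-δ * (((1 : ℕ) : ℝ) - 1))) * p 0
          + 4 * (p (1 - 1)) ^ 2 := self_le_add_right _ _
  · -- 2 ≤ k
    set t : ℝ := (3 : ℝ) ^ (k - 1) with ht_def
    have ht1 : (1 : ℝ) ≤ t := one_le_pow₀ (by norm_num)
    have ht3 : (3 : ℝ) ≤ t := by
      rw [ht_def]
      calc (3 : ℝ) = 3 ^ 1 := (pow_one 3).symm
        _ ≤ 3 ^ (k - 1) := pow_le_pow_right₀ (by norm_num) (by omega)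
    -- Hoffmann–Jørgensen
    have hHJ := hoffmann_jorgensen (μ := μ) hXmeas hXindep hXsymm hN (t := t) ht1
    have hpk : p k = μ ((fun ω (i : Fin n) => X i ω) ⁻¹' {f | 3 * t < N (∑ i, f i)}) := by
      rw [hp k]
      have h3k : (3 : ℝ) ^ k = 3 * t := by
        rw [ht_def, ← pow_succ']
        congr 1
        omega
      congr 1
      ext ω
      simp only [Set.mem_setOf_eq, Set.mem_preimage, h3k]
    have hpk1 : μ ((fun ω (i : Fin n) => X i ω) ⁻¹' {f | t < N (∑ i, f i)}) = p (k - 1) := by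
      rw [hp (k - 1)]
      rfl
    -- max term
    have hmax : μ ((fun ω (i : Fin n) => X i ω) ⁻¹' {f | ∃ i, t < N (f i)})
        ≤ ENNReal.ofReal (6 * C * (3 : ℝ) ^ (-δ * ((k : ℝ) - 1))) * p 0 := by
      have hcup : (fun ω (i : Fin n) => X i ω) ⁻¹' {f | ∃ i, t < N (f i)}
          = ⋃ i, {ω | t < N (X i ω)} := by
        ext ω
        simp only [Set.mem_preimage, Set.mem_setOf_eq, Set.mem_iUnion]
      have hterm : ∀ i, μ {ω | t < N (X i ω)}
          ≤ ENNReal.ofReal (C * t ^ (-δ)) * μ {ω | 1 < N (X i ω)} := by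
        intro i
        by_cases hgood : μ {ω | 1 < N (X i ω)} < ENNReal.ofReal θ
        · exact hWB i N hN hgood t ht1
        · have hqeq : μ {ω | 1 < N (X i ω)} = ENNReal.ofReal θ :=
            le_antisymm (hqθ i) (not_lt.mp hgood)
          rw [bad_tail_zero hXmeas hXindep hXsymm hN hθ0 i hqeq
            (hP0 ▸ hp0h) (hP0 ▸ hp0t) ht3]
          exact zero_le
      have hconst_eq : ENNReal.ofReal (C * t ^ (-δ)) * (6 * p 0)
          = ENNReal.ofReal (6 * C * (3 : ℝ) ^ (-δ * ((k : ℝ) - 1))) * p 0 := by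
        have htpow : t ^ (-δ) = (3 : ℝ) ^ (-δ * ((k : ℝ) - 1)) := by
          rw [ht_def, ← Real.rpow_natCast (3 : ℝ) (k - 1), ← Real.rpow_mul (by norm_num)]
          congr 1
          have : ((k - 1 : ℕ) : ℝ) = (k : ℝ) - 1 := by
            push_cast [Nat.cast_sub hk]
            ring
          rw [this]
          ring
        rw [htpow, ← mul_assoc, mul_comm (ENNReal.ofReal _) 6,
          ← ENNReal.ofReal_ofNat 6, ← ENNReal.ofReal_mul (by norm_num)]
        congr 2
        ring
      calc μ ((fun ω (i : Fin n) => X i ω) ⁻¹' {f | ∃ i, t < N (f i)})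
          ≤ ∑ i, μ {ω | t < N (X i ω)} := by
            rw [hcup]; exact measure_iUnion_fintype_le μ _
        _ ≤ ∑ i, ENNReal.ofReal (C * t ^ (-δ)) * μ {ω | 1 < N (X i ω)} :=
            Finset.sum_le_sum fun i _ => hterm i
        _ = ENNReal.ofReal (C * t ^ (-δ)) * ∑ i, μ {ω | 1 < N (X i ω)} := by
            rw [Finset.mul_sum]
        _ ≤ ENNReal.ofReal (C * t ^ (-δ)) * (6 * p 0) := mul_le_mul_right hq_sum _
        _ = ENNReal.ofReal (6 * C * (3 : ℝ) ^ (-δ * ((k : ℝ) - 1))) * p 0 := hconst_eq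
    calc p k = μ ((fun ω (i : Fin n) => X i ω) ⁻¹' {f | 3 * t < N (∑ i, f i)}) := hpk
      _ ≤ μ ((fun ω (i : Fin n) => X i ω) ⁻¹' {f | ∃ i, t < N (f i)})
          + (2 * μ ((fun ω (i : Fin n) => X i ω) ⁻¹' {f | t < N (∑ i, f i)}))
            * (2 * μ ((fun ω (i : Fin n) => X i ω) ⁻¹' {f | t < N (∑ i, f i)})) := hHJ
      _ ≤ ENNReal.ofReal (6 * C * (3 : ℝ) ^ (-δ * ((k : ℝ) - 1))) * p 0
          + (2 * p (k - 1)) * (2 * p (k - 1)) := by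
            rw [hpk1]
            exact add_le_add_left hmax _
      _ = ENNReal.ofReal (6 * C * (3 : ℝ) ^ (-δ * ((k : ℝ) - 1))) * p 0
          + 4 * (p (k - 1)) ^ 2 := by ring
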